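/- Let M be a positive semidefinite complex d×d matrix with d ≥ 2, ε ≥ 0, and 0 ≤ η ≤ 1. Then there exist density matrices γ and Φ with D(γ,Φ) ≤ η such that tr(M·(γ − e^ε·Φ)) = η·λ_max(M) − (e^ε + η − 1)·λ_min(M). In particular, γ = η|ψ⟩⟨ψ| + (1−η)|φ⟩⟨φ| and Φ = |φ⟩⟨φ| work, where |ψ⟩ and |φ⟩ are orthonormal eigenvectors of M for the eigenvalues λ_max(M) and λ_min(M), respectively. -/

import Mathlib

open Matrix BigOperators
open scoped ComplexOrder

namespace QDP

variable {n : Type*} [Fintype n] [DecidableEq n]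

/-- The positive semidefinite square root, as `Matrix.PosSemidef.sqrt` was defined in older Mathlib. -/
noncomputable def PosSemidef.sqrt {A : Matrix n n ℂ} (hA : A.PosSemidef) : Matrix n n ℂ :=
  hA.1.eigenvectorUnitary.1 * diagonal ((↑) ∘ Real.sqrt ∘ hA.1.eigenvalues) *
  (star hA.1.eigenvectorUnitary : Matrix n n ℂ)

/-- Trace distance `D(ρ,σ) = (1/2) tr |ρ - σ|`, where `|A| = sqrt (Aᴴ A)`. -/
noncomputable def traceDist (ρ σ : Matrix n n ℂ) : ℝ :=
  (1 / 2 : ℝ) * ((PosSemidef.sqrt (Matrix.posSemidef_conjTranspose_mul_self (ρ - σ))).trace).re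

/-- A density matrix: positive semidefinite with trace one. -/
def IsDensity (ρ : Matrix n n ℂ) : Prop := ρ.PosSemidef ∧ ρ.trace = 1

/-- The largest eigenvalue of a (Hermitian) matrix. -/
noncomputable def lamMax (M : Matrix n n ℂ) : ℝ :=
  if h : M.IsHermitian then ⨆ i, h.eigenvalues i else 0

/-- The smallest eigenvalue of a (Hermitian) matrix. -/
noncomputable def lamMin (M : Matrix n n ℂ) : ℝ :=
  if h : M.IsHermitian then ⨅ i, h.eigenvalues i else 0

/-- Application of a quantum channel given by Kraus matrices. -/
noncomputable def applyChan {ι : Type*} [Fintype ι] (E : ι → Matrix n n ℂ)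
    (ρ : Matrix n n ℂ) : Matrix n n ℂ := ∑ j, E j * ρ * (E j)ᴴ

/-- The dual of a quantum channel given by Kraus matrices. -/
noncomputable def dualChan {ι : Type*} [Fintype ι] (E : ι → Matrix n n ℂ)
    (M : Matrix n n ℂ) : Matrix n n ℂ := ∑ j, (E j)ᴴ * M * E j

/-- `(ε,δ)`-differential privacy within `η` of the quantum algorithm `(E, M)`. -/
def IsDP {ι : Type*} [Fintype ι] {O : Type*} [Fintype O]
    (E : ι → Matrix n n ℂ) (M : O → Matrix n n ℂ) (ε δ η : ℝ) : Prop :=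
  ∀ ρ σ : Matrix n n ℂ, IsDensity ρ → IsDensity σ → traceDist ρ σ ≤ η →
    ∀ S : Finset O,
      (∑ k ∈ S, (M k * applyChan E ρ).trace).re ≤
        Real.exp ε * (∑ k ∈ S, (M k * applyChan E σ).trace).re + δ

/-- Rank-one projection `|ψ⟩⟨ψ|`. -/
noncomputable def proj (ψ : n → ℂ) : Matrix n n ℂ := vecMulVec ψ (star ψ)

end QDP

/-!
The mixture `γ = η P + (1 - η) Q` of the orthogonal eigenprojections `P = |ψ⟩⟨ψ|`, `Q = |φ⟩⟨φ|`
differs from `Φ = Q` by `η (P - Q)`, whose absolute value is `η (P + Q)` because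
`(P - Q)² = P + Q = (P + Q)²`; hence `D(γ, Φ) = η`. Since `M P = λ_max P` and `M Q = λ_min Q`,
the trace `tr (M (γ - e^ε Φ))` evaluates to `η λ_max + (1 - η - e^ε) λ_min`.
-/

namespace QDP

variable {n : Type*} [Fintype n]

lemma star_dotProduct_eq_zero_comm {ψ φ : n → ℂ} (h : star ψ ⬝ᵥ φ = 0) : star φ ⬝ᵥ ψ = 0 := by
  rw [star_dotProduct, h, star_zero]

lemma proj_mul_proj (ψ φ : n → ℂ) :
    proj ψ * proj φ = (star ψ ⬝ᵥ φ) • vecMulVec ψ (star φ) := by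
  rw [proj, proj, vecMulVec_mul_vecMulVec, vecMulVec_smul]

lemma proj_mul_self {ψ : n → ℂ} (hψ : star ψ ⬝ᵥ ψ = 1) : proj ψ * proj ψ = proj ψ := by
  rw [proj_mul_proj, hψ, one_smul, proj]

lemma proj_mul_proj_of_orthogonal {ψ φ : n → ℂ} (h : star ψ ⬝ᵥ φ = 0) :
    proj ψ * proj φ = 0 := by
  rw [proj_mul_proj, h, zero_smul]

lemma posSemidef_proj (ψ : n → ℂ) : (proj ψ).PosSemidef :=
  posSemidef_vecMulVec_self_star ψ

lemma trace_proj (ψ : n → ℂ) : (proj ψ).trace = star ψ ⬝ᵥ ψ := by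
  rw [proj, trace_vecMulVec, dotProduct_comm]

lemma isDensity_proj {ψ : n → ℂ} (hψ : star ψ ⬝ᵥ ψ = 1) : IsDensity (proj ψ) :=
  ⟨posSemidef_proj ψ, by rw [trace_proj, hψ]⟩

lemma mul_proj_of_mulVec_eq_smul {M : Matrix n n ℂ} {ψ : n → ℂ} {c : ℂ}
    (h : M *ᵥ ψ = c • ψ) : M * proj ψ = c • proj ψ := by
  rw [proj, mul_vecMulVec, h, smul_vecMulVec]

lemma proj_add_proj_mul_self {ψ φ : n → ℂ} (hψ : star ψ ⬝ᵥ ψ = 1) (hφ : star φ ⬝ᵥ φ = 1)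
    (horth : star ψ ⬝ᵥ φ = 0) :
    (proj ψ + proj φ) * (proj ψ + proj φ) = proj ψ + proj φ := by
  rw [add_mul, mul_add, mul_add, proj_mul_self hψ, proj_mul_self hφ,
    proj_mul_proj_of_orthogonal horth,
    proj_mul_proj_of_orthogonal (star_dotProduct_eq_zero_comm horth), add_zero, zero_add]

lemma conjTranspose_proj_sub_proj_mul_self {ψ φ : n → ℂ} (hψ : star ψ ⬝ᵥ ψ = 1)
    (hφ : star φ ⬝ᵥ φ = 1) (horth : star ψ ⬝ᵥ φ = 0) :
    (proj ψ - proj φ)ᴴ * (proj ψ - proj φ) = proj ψ + proj φ := by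
  rw [conjTranspose_sub, (posSemidef_proj ψ).1.eq, (posSemidef_proj φ).1.eq, sub_mul, mul_sub,
    mul_sub, proj_mul_self hψ, proj_mul_self hφ, proj_mul_proj_of_orthogonal horth,
    proj_mul_proj_of_orthogonal (star_dotProduct_eq_zero_comm horth)]
  abel

lemma re_trace_mul_mix_proj_sub {M : Matrix n n ℂ} {ψ φ : n → ℂ} {a b : ℝ}
    (hψ : star ψ ⬝ᵥ ψ = 1) (hφ : star φ ⬝ᵥ φ = 1)
    (hψe : M *ᵥ ψ = (a : ℂ) • ψ) (hφe : M *ᵥ φ = (b : ℂ) • φ) (η c : ℝ) :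
    (M * ((η : ℂ) • proj ψ + ((1 - η : ℝ) : ℂ) • proj φ - (c : ℂ) • proj φ)).trace.re =
      η * a - (c + η - 1) * b := by
  rw [mul_sub, mul_add, Matrix.mul_smul, Matrix.mul_smul, Matrix.mul_smul,
    mul_proj_of_mulVec_eq_smul hψe, mul_proj_of_mulVec_eq_smul hφe]
  simp only [trace_sub, trace_add, trace_smul, trace_proj, hψ, hφ, smul_eq_mul, mul_one]
  push_cast
  simp only [Complex.sub_re, Complex.add_re, Complex.mul_re, Complex.ofReal_re,
    Complex.ofReal_im, Complex.sub_im, Complex.one_re, Complex.one_im]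
  ring

lemma IsDensity.mix {ρ σ : Matrix n n ℂ} (hρ : IsDensity ρ) (hσ : IsDensity σ) {t : ℝ}
    (ht0 : 0 ≤ t) (ht1 : t ≤ 1) : IsDensity ((t : ℂ) • ρ + ((1 - t : ℝ) : ℂ) • σ) := by
  refine ⟨(hρ.1.smul ?_).add (hσ.1.smul ?_), ?_⟩
  · exact_mod_cast ht0
  · exact_mod_cast sub_nonneg.mpr ht1
  · rw [trace_add, trace_smul, trace_smul, hρ.2, hσ.2, smul_eq_mul, smul_eq_mul]
    push_cast
    ring

variable [DecidableEq n]

open scoped MatrixOrder in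
lemma PosSemidef.sqrt_eq_of_sq_eq {A B : Matrix n n ℂ} (hA : A.PosSemidef)
    (hB : B.PosSemidef) (h : B ^ 2 = A) : PosSemidef.sqrt hA = B := by
  have hsqrt : PosSemidef.sqrt hA = cfc Real.sqrt A := by
    rw [hA.1.cfc_eq]
    simp [PosSemidef.sqrt, IsHermitian.cfc, Unitary.conjStarAlgAut_apply]
  rw [hsqrt, ← cfcₙ_eq_cfc, ← CFC.sqrt_eq_real_sqrt A hA.nonneg]
  exact CFC.sqrt_unique (by rw [← h, sq]) hB.nonneg

lemma traceDist_eq_of_sq_eq {ρ σ B : Matrix n n ℂ} (hB : B.PosSemidef)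
    (h : B ^ 2 = (ρ - σ)ᴴ * (ρ - σ)) : traceDist ρ σ = 1 / 2 * B.trace.re := by
  rw [traceDist, PosSemidef.sqrt_eq_of_sq_eq _ hB h]

lemma traceDist_mix_proj {ψ φ : n → ℂ} (hψ : star ψ ⬝ᵥ ψ = 1) (hφ : star φ ⬝ᵥ φ = 1)
    (horth : star ψ ⬝ᵥ φ = 0) {η : ℝ} (hη : 0 ≤ η) :
    traceDist ((η : ℂ) • proj ψ + ((1 - η : ℝ) : ℂ) • proj φ) (proj φ) = η := by
  have hdiff : (η : ℂ) • proj ψ + ((1 - η : ℝ) : ℂ) • proj φ - proj φ =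
      (η : ℂ) • (proj ψ - proj φ) := by
    push_cast
    module
  have habs : ((η : ℂ) • (proj ψ + proj φ)).PosSemidef :=
    ((posSemidef_proj ψ).add (posSemidef_proj φ)).smul (by exact_mod_cast hη)
  have hsq : ((η : ℂ) • (proj ψ + proj φ)) ^ 2 =
      ((η : ℂ) • proj ψ + ((1 - η : ℝ) : ℂ) • proj φ - proj φ)ᴴ *
        ((η : ℂ) • proj ψ + ((1 - η : ℝ) : ℂ) • proj φ - proj φ) := by
    rw [hdiff, conjTranspose_smul, sq, smul_mul_smul_comm, smul_mul_smul_comm,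
      proj_add_proj_mul_self hψ hφ horth, conjTranspose_proj_sub_proj_mul_self hψ hφ horth,
      Complex.star_def, Complex.conj_ofReal]
  rw [traceDist_eq_of_sq_eq habs hsq, trace_smul, trace_add, trace_proj, trace_proj, hψ, hφ,
    smul_eq_mul, Complex.re_ofReal_mul, one_add_one_eq_two, Complex.re_ofNat]
  ring

end QDP

open QDP in
theorem trace_diff_bound_attained_general {d : ℕ}
    (M : Matrix (Fin d) (Fin d) ℂ)
    (ε η : ℝ) (hη0 : 0 ≤ η) (hη1 : η ≤ 1)
    (ψ φ : Fin d → ℂ) (hψ : star ψ ⬝ᵥ ψ = 1) (hφ : star φ ⬝ᵥ φ = 1)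
    (horth : star ψ ⬝ᵥ φ = 0)
    (hψe : M *ᵥ ψ = ((lamMax M : ℝ) : ℂ) • ψ)
    (hφe : M *ᵥ φ = ((lamMin M : ℝ) : ℂ) • φ) :
    (∃ γ Φ : Matrix (Fin d) (Fin d) ℂ, IsDensity γ ∧ IsDensity Φ ∧ traceDist γ Φ ≤ η ∧
      (M * (γ - ((Real.exp ε : ℝ) : ℂ) • Φ)).trace.re =
        η * lamMax M - (Real.exp ε + η - 1) * lamMin M) ∧
    IsDensity ((η : ℂ) • proj ψ + ((1 - η : ℝ) : ℂ) • proj φ) ∧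
    IsDensity (proj φ) ∧
    traceDist ((η : ℂ) • proj ψ + ((1 - η : ℝ) : ℂ) • proj φ) (proj φ) ≤ η ∧
    (M * (((η : ℂ) • proj ψ + ((1 - η : ℝ) : ℂ) • proj φ) -
        ((Real.exp ε : ℝ) : ℂ) • proj φ)).trace.re =
      η * lamMax M - (Real.exp ε + η - 1) * lamMin M := by
  have hγ := (isDensity_proj hψ).mix (isDensity_proj hφ) hη0 hη1
  have hΦ := isDensity_proj hφ
  have hdist := (traceDist_mix_proj hψ hφ horth hη0).le
  have htrace := re_trace_mul_mix_proj_sub hψ hφ hψe hφe η (Real.exp ε)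
  exact ⟨⟨_, _, hγ, hΦ, hdist, htrace⟩, hγ, hΦ, hdist, htrace⟩

open QDP in
/-- The bound `η λ_max(M) - (e^ε + η - 1) λ_min(M)` is attained: in particular it is attained
at `γ = η|ψ⟩⟨ψ| + (1-η)|φ⟩⟨φ|` and `Φ = |φ⟩⟨φ|` for orthonormal eigenvectors `ψ, φ` of `M`
corresponding to the extremal eigenvalues. -/
theorem trace_diff_bound_attained {d : ℕ} (hd : 2 ≤ d)
    (M : Matrix (Fin d) (Fin d) ℂ) (hM : M.PosSemidef)
    (ε η : ℝ) (hε : 0 ≤ ε) (hη0 : 0 ≤ η) (hη1 : η ≤ 1)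
    (ψ φ : Fin d → ℂ) (hψ : star ψ ⬝ᵥ ψ = 1) (hφ : star φ ⬝ᵥ φ = 1)
    (horth : star ψ ⬝ᵥ φ = 0)
    (hψe : M *ᵥ ψ = ((lamMax M : ℝ) : ℂ) • ψ)
    (hφe : M *ᵥ φ = ((lamMin M : ℝ) : ℂ) • φ) :
    (∃ γ Φ : Matrix (Fin d) (Fin d) ℂ, IsDensity γ ∧ IsDensity Φ ∧ traceDist γ Φ ≤ η ∧
      (M * (γ - ((Real.exp ε : ℝ) : ℂ) • Φ)).trace.re =
        η * lamMax M - (Real.exp ε + η - 1) * lamMin M) ∧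
    IsDensity ((η : ℂ) • proj ψ + ((1 - η : ℝ) : ℂ) • proj φ) ∧
    IsDensity (proj φ) ∧
    traceDist ((η : ℂ) • proj ψ + ((1 - η : ℝ) : ℂ) • proj φ) (proj φ) ≤ η ∧
    (M * (((η : ℂ) • proj ψ + ((1 - η : ℝ) : ℂ) • proj φ) -
        ((Real.exp ε : ℝ) : ℂ) • proj φ)).trace.re =
      η * lamMax M - (Real.exp ε + η - 1) * lamMin M :=
  trace_diff_bound_attained_general M ε η hη0 hη1 ψ φ hψ hφ horth hψe hφe
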